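/- arXiv:2506.08284 — 3 statements merged into one kernel-verified Lean document; each statement's English description precedes it below -/
import Mathlib

section
/- Let L be a natural number and, for each level ℓ ∈ {0,…,L}, let n_ℓ and m_ℓ be dimensions, S_ℓ an n_ℓ × n_ℓ real matrix and D_ℓ an n_ℓ × m_ℓ real matrix; for each ℓ < L let P^e_ℓ be an n_ℓ × n_{ℓ+1} real matrix and P^n_ℓ an m_ℓ × m_{ℓ+1} real matrix. Suppose for every ℓ < L that S_{ℓ+1} = (P^e_ℓ)ᵀ · S_ℓ · P^e_ℓ (Galerkin coarsening) and P^e_ℓ · D_{ℓ+1} = D_ℓ · P^n_ℓ (the level-ℓ commuting relationship). If S_0 · D_0 = 0, then S_ℓ · D_ℓ = 0 for every level ℓ ∈ {0,…,L}. -/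
open Matrix

/-- Enforcing the commuting relationship on every level of the multigrid
hierarchy preserves the null-space property on all levels. -/
theorem hierarchy_preserves_nullspace
    (L : ℕ) (n m : Fin (L + 1) → ℕ)
    (S : ∀ ℓ : Fin (L + 1), Matrix (Fin (n ℓ)) (Fin (n ℓ)) ℝ)
    (D : ∀ ℓ : Fin (L + 1), Matrix (Fin (n ℓ)) (Fin (m ℓ)) ℝ)
    (Pe : ∀ ℓ : Fin L, Matrix (Fin (n ℓ.castSucc)) (Fin (n ℓ.succ)) ℝ)
    (Pn : ∀ ℓ : Fin L, Matrix (Fin (m ℓ.castSucc)) (Fin (m ℓ.succ)) ℝ)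
    (hGalerkin : ∀ ℓ : Fin L, S ℓ.succ = (Pe ℓ)ᵀ * S ℓ.castSucc * Pe ℓ)
    (hcomm : ∀ ℓ : Fin L, Pe ℓ * D ℓ.succ = D ℓ.castSucc * Pn ℓ)
    (h0 : S 0 * D 0 = 0) :
    ∀ ℓ : Fin (L + 1), S ℓ * D ℓ = 0 := by
  intro ℓ
  induction ℓ using Fin.induction with
  | zero => exact h0
  | succ i ih =>
    calc S i.succ * D i.succ = (Pe i)ᵀ * S i.castSucc * (Pe i * D i.succ) := by
          rw [hGalerkin i, Matrix.mul_assoc]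
      _ = (Pe i)ᵀ * (S i.castSucc * D i.castSucc) * Pn i := by
          rw [hcomm i, Matrix.mul_assoc, Matrix.mul_assoc, Matrix.mul_assoc]
      _ = 0 := by rw [ih, Matrix.mul_zero, Matrix.zero_mul]
end

section
/- Let D_h be an n_e × m_n real matrix, P_n an m_n × m_H real matrix, P_e an n_e × n_H real matrix, and D_H an n_H × m_H real matrix. Suppose the commuting relationship P_e · D_H = D_h · P_n holds, that D_H · 𝟙 = 0 where 𝟙 denotes the all-ones vector (every row of D_H sums to zero), and that the kernel of D_h, i.e. the set {x | D_h.mulVec x = 0}, equals the span of the all-ones vector. Then there exists a scalar c ∈ ℝ such that P_n · 𝟙 = c • 𝟙, i.e. the nodal prolongator maps constants to constants. -/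
open Matrix

/-- If the commuting relationship `P_e * D_H = D_h * P_n` holds, every row of
`D_H` sums to zero, and the kernel of `D_h` is exactly the span of the
all-ones vector, then the nodal prolongator maps constants to constants. -/
theorem nodal_prolongator_preserves_constants
    {ne mn nH mH : ℕ}
    (Dh : Matrix (Fin ne) (Fin mn) ℝ)
    (Pn : Matrix (Fin mn) (Fin mH) ℝ)
    (Pe : Matrix (Fin ne) (Fin nH) ℝ)
    (DH : Matrix (Fin nH) (Fin mH) ℝ)
    (hcomm : Pe * DH = Dh * Pn)
    (hDH : DH.mulVec (fun _ => (1 : ℝ)) = 0)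
    (hker : {x : Fin mn → ℝ | Dh.mulVec x = 0} =
      (Submodule.span ℝ {(fun _ => (1 : ℝ) : Fin mn → ℝ)} : Set (Fin mn → ℝ))) :
    ∃ c : ℝ, Pn.mulVec (fun _ => (1 : ℝ)) = c • (fun _ => (1 : ℝ)) := by
  have h0 : Dh.mulVec (Pn.mulVec (fun _ => (1 : ℝ))) = 0 := by
    rw [mulVec_mulVec, ← hcomm, ← mulVec_mulVec, hDH, mulVec_zero]
  have hmem : Pn.mulVec (fun _ => (1 : ℝ)) ∈
      (Submodule.span ℝ {(fun _ => (1 : ℝ) : Fin mn → ℝ)} : Set (Fin mn → ℝ)) := by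
    rw [← hker]; exact h0
  rcases Submodule.mem_span_singleton.mp hmem with ⟨c, hc⟩
  exact ⟨c, hc.symm⟩
end

section
/- Let A be a symmetric positive semidefinite n × n real matrix, X an m × n real matrix, b : Fin m → ℝ, and p₀ : Fin n → ℝ with X.mulVec p₀ = b. Suppose that for every index k in the support of A.mulVec p₀ there exist a row index i and a nonzero scalar c such that the i-th row of X equals c times the k-th standard basis vector. Then δ = 0 together with some λ : Fin m → ℝ solves the saddle-point system A.mulVec δ + Xᵀ.mulVec λ = −A.mulVec p₀, X.mulVec δ = 0; consequently p₀ is a global minimizer of p ↦ p ⬝ᵥ (A.mulVec p) over {p | X.mulVec p = b}. -/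
open Matrix

/-- If the gradient `A.mulVec p₀` at a feasible point `p₀` is supported only on
indices pinned by single-nonzero rows of `X`, then `δ = 0` together with some
multiplier `lam` solves the saddle-point (KKT) system, and consequently `p₀` is
a global minimizer of the quadratic energy over the feasible set. -/
theorem ideal_prolongator_solves_saddle_point
    {n m : ℕ} (A : Matrix (Fin n) (Fin n) ℝ)
    (hA : A.PosSemidef)
    (X : Matrix (Fin m) (Fin n) ℝ) (b : Fin m → ℝ)
    (p₀ : Fin n → ℝ) (hfeas : X.mulVec p₀ = b)
    (hpin : ∀ k : Fin n, A.mulVec p₀ k ≠ 0 →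
      ∃ (i : Fin m) (c : ℝ), c ≠ 0 ∧ X i = c • (Pi.single k 1 : Fin n → ℝ)) :
    (∃ lam : Fin m → ℝ,
        A.mulVec (0 : Fin n → ℝ) + Xᵀ.mulVec lam = -(A.mulVec p₀) ∧
        X.mulVec (0 : Fin n → ℝ) = 0) ∧
      ∀ p : Fin n → ℝ, X.mulVec p = b →
        p₀ ⬝ᵥ A.mulVec p₀ ≤ p ⬝ᵥ A.mulVec p := by
  classical
  set g := A.mulVec p₀ with hg
  -- build the multiplier
  have hlam : ∃ lam : Fin m → ℝ, Xᵀ.mulVec lam = -g := by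
    set f : Fin n → Fin m → ℝ := fun k =>
      if h : g k ≠ 0 then
        (-(g k) / (hpin k h).choose_spec.choose) •
          (Pi.single (hpin k h).choose 1 : Fin m → ℝ)
      else 0 with hf
    refine ⟨∑ k, f k, ?_⟩
    have hsum : Xᵀ.mulVec (∑ k, f k) = ∑ k, Xᵀ.mulVec (f k) := by
      have := map_sum (Xᵀ.mulVecLin) f Finset.univ
      simpa only [Matrix.mulVecLin_apply] using this
    rw [hsum]
    have hterm : ∀ k, Xᵀ.mulVec (f k) = Pi.single k (-(g k)) := by
      intro k
      by_cases h : g k ≠ 0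
      · set i := (hpin k h).choose with hi
        set c := (hpin k h).choose_spec.choose with hcdef
        obtain ⟨hc, hrow⟩ := (hpin k h).choose_spec.choose_spec
        have hfk : f k = (-(g k) / c) • (Pi.single i 1 : Fin m → ℝ) := by
          simp [hf, h, hi, hcdef]
        rw [hfk]
        have hsingle : Xᵀ.mulVec (Pi.single i (1 : ℝ)) = X i := by
          ext j
          simp [Matrix.mulVec_single, Matrix.transpose_apply]
        rw [Matrix.mulVec_smul, hsingle, hrow, smul_smul,
          div_mul_cancel₀ _ hc]
        ext j
        by_cases hj : j = k
        · subst hj; simp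
        · simp [Pi.single_eq_of_ne hj]
      · push_neg at h
        simp [hf, h]
    rw [Finset.sum_congr rfl fun k _ => hterm k]
    ext j
    simp [Finset.sum_apply, Pi.single_apply]
  obtain ⟨lam, hlam⟩ := hlam
  constructor
  · exact ⟨lam, by simp [hlam], by simp⟩
  · intro p hp
    set d := p - p₀ with hd
    have hXd : X.mulVec d = 0 := by
      simp [hd, Matrix.mulVec_sub, hp, hfeas]
    have hdg : d ⬝ᵥ g = 0 := by
      have h1 : d ⬝ᵥ Xᵀ.mulVec lam = (X.mulVec d) ⬝ᵥ lam := by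
        rw [Matrix.dotProduct_mulVec, Matrix.vecMul_transpose]
      have h2 : d ⬝ᵥ (-g) = 0 := by
        rw [← hlam, h1, hXd, zero_dotProduct]
      simpa [dotProduct_neg, neg_eq_zero] using h2
    have hgd : g ⬝ᵥ d = 0 := by rwa [dotProduct_comm]
    have hAT : Aᵀ = A := by
      ext i j
      simpa using congrFun (congrFun hA.1 i) j
    have hsym : p₀ ⬝ᵥ A.mulVec d = g ⬝ᵥ d := by
      rw [Matrix.dotProduct_mulVec, hg]
      congr 1
      rw [← Matrix.vecMul_transpose, hAT]
    have hpd : p = p₀ + d := by simp [hd]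
    have hdAd : 0 ≤ d ⬝ᵥ A.mulVec d := by simpa using hA.dotProduct_mulVec_nonneg d
    have hexp : p ⬝ᵥ A.mulVec p =
        p₀ ⬝ᵥ A.mulVec p₀ + p₀ ⬝ᵥ A.mulVec d + d ⬝ᵥ A.mulVec p₀ + d ⬝ᵥ A.mulVec d := by
      rw [hpd, Matrix.mulVec_add, add_dotProduct, dotProduct_add,
        dotProduct_add]
      ring
    have h3 : p₀ ⬝ᵥ A.mulVec d = 0 := by rw [hsym]; exact hgd
    have h4 : d ⬝ᵥ A.mulVec p₀ = 0 := by rw [← hg]; exact hdg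
    rw [hexp, h3, h4]
    linarith
end
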